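/- arXiv:2506.01610 — 4 statements merged into one kernel-verified Lean document; each statement's English description precedes it below -/
import Mathlib

section
/- (Hilbert–Schmidt form of the product theorem; the key step (eq. for the 2-Schatten norm) in the proof of Theorem 3.1, specialized to the circle.) For all continuous 2π-periodic functions f, g : ℝ → ℝ, one has lim_{k→∞} (1/k) Tr[ (T_k[f]·T_k[g] − T_k[f·g])·(T_k[f]·T_k[g] − T_k[f·g])^* ] = 0, i.e. the normalized squared Frobenius norm of T_k[f]·T_k[g] − T_k[f·g] tends to 0. -/
open MeasureTheory Filter Matrix

/-- The `j`-th Fourier coefficient `a_j = (1/2π) ∫₀^{2π} f(θ) e^{-ijθ} dθ`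
of a `2π`-periodic function `f : ℝ → ℝ`. -/
noncomputable def fourierCoefficient (f : ℝ → ℝ) (j : ℤ) : ℂ :=
  (1 / (2 * Real.pi)) * ∫ θ in (0:ℝ)..(2 * Real.pi),
    (f θ : ℂ) * Complex.exp (-(Complex.I * (j : ℂ) * (θ : ℂ)))

/-- The `k × k` Toeplitz matrix `T_k[f]` with entries `(T_k[f])_{pq} = a_{p-q}`. -/
noncomputable def toeplitzMatrix (f : ℝ → ℝ) (k : ℕ) : Matrix (Fin k) (Fin k) ℂ :=
  Matrix.of fun p q => fourierCoefficient f ((p : ℤ) - (q : ℤ))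

/-!
Write `T_k[u]` for the Toeplitz matrix of `u ∈ C(𝕋, ℂ)` and
`D_k(u, v) = T_k[u] T_k[v] - T_k[u v]`, which is linear in `v`. Bessel's inequality for `u X`,
where `X` is the trigonometric polynomial with coefficient vector `x`, bounds the operator norm of
`T_k[u]` by `‖u‖_∞`, hence `‖D_k(u, v)‖_F ≤ 2 ‖u‖_∞ ‖v‖_∞ √k`. For a character `v = e_b` the
matrix `T_k[e_b]` is a shift, and `D_k(u, e_b)` has at most `|b|` nonzero columns, each of norm at
most `‖u‖_∞`; so `‖D_k(u, e_b)‖_F` is bounded in `k`. By linearity and the density of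
trigonometric polynomials, `‖D_k(u, v)‖_F = o(√k)` for every continuous `v`; the trace in the
theorem is `‖D_k(f, g)‖_F²`.
-/

open Asymptotics AddCircle

attribute [local instance] Matrix.frobeniusSeminormedAddCommGroup
  Matrix.frobeniusNormedAddCommGroup Matrix.frobeniusNormedSpace

section LinearFamilies

variable {ι 𝕜 X : Type*} [NormedField 𝕜] {M : ι → Type*} [∀ i, SeminormedAddCommGroup (M i)]
  [∀ i, NormedSpace 𝕜 (M i)] {l : Filter ι} {g : ι → ℝ}

theorem isLittleO_norm_apply_of_mem_span [AddCommGroup X] [Module 𝕜 X] (L : ∀ i, X →ₗ[𝕜] M i)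
    {s : Set X} (hs : ∀ x ∈ s, (fun i => ‖L i x‖) =o[l] g) {x : X}
    (hx : x ∈ Submodule.span 𝕜 s) : (fun i => ‖L i x‖) =o[l] g := by
  induction hx using Submodule.span_induction with
  | mem x hx => exact hs x hx
  | zero => simp
  | add x y _ _ hx hy =>
    refine (isBigO_of_le _ fun i => ?_).trans_isLittleO (hx.add hy)
    simpa [map_add, abs_of_nonneg (add_nonneg (norm_nonneg _) (norm_nonneg _))]
      using norm_add_le (L i x) (L i y)
  | smul c x _ hx => simpa [norm_smul] using hx.const_mul_left ‖c‖

theorem isLittleO_norm_apply_of_dense [SeminormedAddCommGroup X] [NormedSpace 𝕜 X]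
    (L : ∀ i, X →ₗ[𝕜] M i) {C : ℝ} (hL : ∀ i x, ‖L i x‖ ≤ C * ‖x‖ * ‖g i‖) {s : Set X}
    (hs : Dense s) (hsL : ∀ x ∈ s, (fun i => ‖L i x‖) =o[l] g) (x : X) :
    (fun i => ‖L i x‖) =o[l] g := by
  refine isLittleO_iff.2 fun c hc => ?_
  obtain ⟨y, hy, hxy⟩ := hs.exists_dist_lt x (show 0 < c / (2 * (|C| + 1)) by positivity)
  have hCxy : C * ‖x - y‖ ≤ c / 2 := by
    rw [← dist_eq_norm]
    calc C * dist x y ≤ (|C| + 1) * (c / (2 * (|C| + 1))) := by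
          gcongr
          · linarith [le_abs_self C]
      _ = c / 2 := by field_simp
  filter_upwards [(hsL y hy).def (half_pos hc)] with i hi
  rw [norm_norm] at hi ⊢
  calc ‖L i x‖ = ‖L i (x - y) + L i y‖ := by rw [← map_add, sub_add_cancel]
    _ ≤ C * ‖x - y‖ * ‖g i‖ + c / 2 * ‖g i‖ := (norm_add_le _ _).trans (add_le_add (hL i _) hi)
    _ ≤ c / 2 * ‖g i‖ + c / 2 * ‖g i‖ := by gcongr
    _ = c * ‖g i‖ := by ring

end LinearFamilies

theorem Matrix.frobenius_norm_sq {m n α : Type*} [Fintype m] [Fintype n] [SeminormedAddCommGroup α]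
    (A : Matrix m n α) : ‖A‖ ^ 2 = ∑ i, ∑ j, ‖A i j‖ ^ 2 := by
  rw [frobenius_norm_def, ← Real.rpow_natCast, ← Real.rpow_mul (by positivity)]
  norm_num

theorem Matrix.trace_mul_conjTranspose_self {m n 𝕜 : Type*} [Fintype m] [Fintype n] [RCLike 𝕜]
    (A : Matrix m n 𝕜) : (A * Aᴴ).trace = ((‖A‖ ^ 2 : ℝ) : 𝕜) := by
  simp [frobenius_norm_sq, trace, mul_apply, RCLike.mul_conj]

theorem card_filter_not_mem_Ico_add_le (k : ℕ) (b : ℤ) :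
    (Finset.univ.filter fun q : Fin k => ¬(0 ≤ (q : ℤ) + b ∧ (q : ℤ) + b < k)).card ≤ b.natAbs := by
  calc _ ≤ (Finset.Ico 0 (-b) ∪ Finset.Ico (k - b) (k : ℤ)).card := by
        refine Finset.card_le_card_of_injOn (fun q => (q : ℤ)) (fun q hq => ?_)
          (Nat.cast_injective.comp Fin.val_injective).injOn
        simp only [Finset.coe_filter, Finset.mem_univ, true_and, Set.mem_ofPred_eq] at hq
        simp only [Finset.coe_union, Finset.coe_Ico, Set.mem_union, Set.mem_Ico]
        omega
    _ ≤ (Finset.Ico 0 (-b)).card + (Finset.Ico (k - b) (k : ℤ)).card := Finset.card_union_le _ _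
    _ = b.natAbs := by simp only [Int.card_Ico]; omega

section Circle

variable {T : ℝ} [Fact (0 < T)]

local notation "L²" => ContinuousMap.toLp (E := ℂ) 2 (haarAddCircle (T := T)) ℂ

theorem fourierCoeff_eq_inner (u : C(AddCircle T, ℂ)) (n : ℤ) :
    fourierCoeff u n = inner ℂ (fourierLp 2 n) (L² u) := by
  rw [← fourierCoeff_toLp, ← fourierBasis_repr, HilbertBasis.repr_apply_apply, coe_fourierBasis]

theorem fourierCoeff_mul_fourier (u : C(AddCircle T, ℂ)) (m n : ℤ) :
    fourierCoeff ⇑(u * fourier (T := T) m) n = fourierCoeff u (n - m) := by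
  refine integral_congr_ae (ae_of_all _ fun t => ?_)
  simp only [ContinuousMap.mul_apply, smul_eq_mul, neg_sub', sub_neg_eq_add, fourier_add]
  ring

theorem sum_sq_norm_fourierCoeff_le {ι : Type*} [Fintype ι] (u : C(AddCircle T, ℂ)) {e : ι → ℤ}
    (he : Function.Injective e) : ∑ i, ‖fourierCoeff u (e i)‖ ^ 2 ≤ ‖L² u‖ ^ 2 := by
  simpa only [Function.comp_apply, fourierCoeff_eq_inner] using
    ((orthonormal_fourier (T := T)).comp e he).sum_inner_products_le (L² u) (s := Finset.univ)

theorem norm_toLp_le (u : C(AddCircle T, ℂ)) : ‖L² u‖ ≤ ‖u‖ := by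
  have h := Lp.norm_le_of_ae_bound (norm_nonneg u) <|
    (ContinuousMap.coeFn_toLp (p := 2) (𝕜 := ℂ) haarAddCircle u).mono fun t ht =>
      ht.symm ▸ u.norm_coe_le_norm t
  simpa [measureUnivNNReal] using h

theorem norm_toLp_mul_le (u w : C(AddCircle T, ℂ)) : ‖L² (u * w)‖ ≤ ‖u‖ * ‖L² w‖ := by
  refine Lp.norm_le_mul_norm_of_ae_le_mul ?_
  filter_upwards [ContinuousMap.coeFn_toLp (p := 2) (𝕜 := ℂ) haarAddCircle (u * w),
    ContinuousMap.coeFn_toLp (p := 2) (𝕜 := ℂ) haarAddCircle w] with t huw hw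
  rw [huw, hw, ContinuousMap.mul_apply, norm_mul]
  gcongr
  exact u.norm_coe_le_norm t

theorem norm_toLp_sum_fourier_sq {ι : Type*} [Fintype ι] {e : ι → ℤ}
    (he : Function.Injective e) (x : ι → ℂ) :
    ‖L² (∑ i, x i • fourier (e i))‖ ^ 2 = ∑ i, ‖x i‖ ^ 2 := by
  have h := ((orthonormal_fourier (T := T)).comp e he).inner_sum x x Finset.univ
  simp only [map_sum, map_smul]
  change ‖∑ i, x i • (fourierLp 2 ∘ e) i‖ ^ 2 = _
  rw [@norm_sq_eq_re_inner ℂ, h]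
  simp [RCLike.conj_mul, ← Complex.ofReal_pow]

variable (T) in
noncomputable def toeplitz (k : ℕ) : C(AddCircle T, ℂ) →ₗ[ℂ] Matrix (Fin k) (Fin k) ℂ where
  toFun u := Matrix.of fun p q => fourierCoeff u ((p : ℤ) - q)
  map_add' u v := by
    ext p q
    simp only [of_apply, Matrix.add_apply, fourierCoeff_eq_inner, map_add, inner_add_right]
  map_smul' c u := by
    ext p q
    simp only [of_apply, Matrix.smul_apply, fourierCoeff_eq_inner, map_smul, inner_smul_right,
      RingHom.id_apply, smul_eq_mul]

@[simp]
theorem toeplitz_apply (k : ℕ) (u : C(AddCircle T, ℂ)) (p q : Fin k) :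
    toeplitz T k u p q = fourierCoeff u ((p : ℤ) - q) :=
  rfl

theorem toeplitz_mulVec {k : ℕ} (u : C(AddCircle T, ℂ)) (x : Fin k → ℂ) (p : Fin k) :
    (toeplitz T k u *ᵥ x) p = fourierCoeff ⇑(u * ∑ q, x q • fourier (T := T) q) p := by
  rw [fourierCoeff_eq_inner, Finset.mul_sum, map_sum, inner_sum, mulVec, dotProduct]
  refine Finset.sum_congr rfl fun q _ => ?_
  rw [mul_smul_comm, map_smul, inner_smul_right, ← fourierCoeff_eq_inner,
    fourierCoeff_mul_fourier, toeplitz_apply, mul_comm]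

theorem sum_sq_norm_toeplitz_mulVec_le {k : ℕ} (u : C(AddCircle T, ℂ)) (x : Fin k → ℂ) :
    ∑ p, ‖(toeplitz T k u *ᵥ x) p‖ ^ 2 ≤ ‖u‖ ^ 2 * ∑ q, ‖x q‖ ^ 2 := by
  have hinj : Function.Injective fun q : Fin k => (q : ℤ) :=
    Nat.cast_injective.comp Fin.val_injective
  set X := ∑ q, x q • fourier (T := T) q
  calc ∑ p, ‖(toeplitz T k u *ᵥ x) p‖ ^ 2 = ∑ p : Fin k, ‖fourierCoeff ⇑(u * X) p‖ ^ 2 := by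
        simp only [toeplitz_mulVec, X]
    _ ≤ ‖L² (u * X)‖ ^ 2 := sum_sq_norm_fourierCoeff_le _ hinj
    _ ≤ (‖u‖ * ‖L² X‖) ^ 2 := by gcongr; exact norm_toLp_mul_le u X
    _ = ‖u‖ ^ 2 * ∑ q, ‖x q‖ ^ 2 := by rw [mul_pow, norm_toLp_sum_fourier_sq hinj]

theorem norm_toeplitz_mul_le {k : ℕ} {n : Type*} [Fintype n] (u : C(AddCircle T, ℂ))
    (B : Matrix (Fin k) n ℂ) : ‖toeplitz T k u * B‖ ≤ ‖u‖ * ‖B‖ := by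
  rw [← pow_le_pow_iff_left₀ (norm_nonneg _) (by positivity) two_ne_zero, mul_pow,
    frobenius_norm_sq, frobenius_norm_sq, Finset.sum_comm,
    Finset.sum_comm (f := fun i j => ‖B i j‖ ^ 2), Finset.mul_sum]
  gcongr with j
  simpa [mul_apply, mulVec, dotProduct] using sum_sq_norm_toeplitz_mulVec_le u (fun i => B i j)

theorem norm_toeplitz_le (k : ℕ) (u : C(AddCircle T, ℂ)) : ‖toeplitz T k u‖ ≤ √k * ‖u‖ := by
  have h1 : ‖(1 : Matrix (Fin k) (Fin k) ℂ)‖ = √k := by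
    rw [← coe_nnnorm, frobenius_nnnorm_one]
    simp
  calc ‖toeplitz T k u‖ = ‖toeplitz T k u * 1‖ := by rw [Matrix.mul_one]
    _ ≤ ‖u‖ * ‖(1 : Matrix (Fin k) (Fin k) ℂ)‖ := norm_toeplitz_mul_le u 1
    _ = √k * ‖u‖ := by rw [h1, mul_comm]

variable (T) in
noncomputable def toeplitzDefect (u : C(AddCircle T, ℂ)) (k : ℕ) :
    C(AddCircle T, ℂ) →ₗ[ℂ] Matrix (Fin k) (Fin k) ℂ :=
  LinearMap.mulLeft ℂ (toeplitz T k u) ∘ₗ toeplitz T k - toeplitz T k ∘ₗ LinearMap.mulLeft ℂ u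

theorem toeplitzDefect_apply (u : C(AddCircle T, ℂ)) (k : ℕ) (v : C(AddCircle T, ℂ)) :
    toeplitzDefect T u k v = toeplitz T k u * toeplitz T k v - toeplitz T k (u * v) :=
  rfl

theorem norm_toeplitzDefect_le (u : C(AddCircle T, ℂ)) (k : ℕ) (v : C(AddCircle T, ℂ)) :
    ‖toeplitzDefect T u k v‖ ≤ 2 * ‖u‖ * ‖v‖ * √k := by
  rw [toeplitzDefect_apply]
  calc _ ≤ ‖toeplitz T k u * toeplitz T k v‖ + ‖toeplitz T k (u * v)‖ := norm_sub_le _ _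
    _ ≤ ‖u‖ * (√k * ‖v‖) + √k * (‖u‖ * ‖v‖) := by
      gcongr
      · exact (norm_toeplitz_mul_le u _).trans (by gcongr; exact norm_toeplitz_le k v)
      · exact (norm_toeplitz_le k _).trans (by gcongr; exact norm_mul_le u v)
    _ = 2 * ‖u‖ * ‖v‖ * √k := by ring

theorem toeplitzDefect_fourier_apply (u : C(AddCircle T, ℂ)) {k : ℕ} (b : ℤ) (p q : Fin k) :
    toeplitzDefect T u k (fourier b) p q =
      if 0 ≤ (q : ℤ) + b ∧ (q : ℤ) + b < k then 0 else -fourierCoeff u (p - (q + b)) := by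
  have hshift : ∀ j : Fin k, toeplitz T k (fourier b) j q = if (j : ℤ) = q + b then 1 else 0 := by
    intro j
    simp [fourierCoeff_fourier, Pi.single_apply, sub_eq_iff_eq_add']
  rw [toeplitzDefect_apply, Matrix.sub_apply, mul_apply, toeplitz_apply, fourierCoeff_mul_fourier,
    sub_sub]
  simp only [hshift, mul_ite, mul_one, mul_zero, toeplitz_apply]
  split_ifs with h
  · rw [Finset.sum_eq_single ⟨(q + b : ℤ).toNat, by omega⟩]
    · simp [Int.toNat_of_nonneg h.1]
    · intro j _ hj
      rw [if_neg]
      contrapose! hj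
      ext
      simp only
      omega
    · simp
  · rw [Finset.sum_eq_zero, zero_sub]
    intro j _
    rw [if_neg]
    omega

theorem norm_toeplitzDefect_fourier_sq_le (u : C(AddCircle T, ℂ)) (k : ℕ) (b : ℤ) :
    ‖toeplitzDefect T u k (fourier b)‖ ^ 2 ≤ b.natAbs * ‖u‖ ^ 2 := by
  rw [frobenius_norm_sq, Finset.sum_comm]
  calc _ = ∑ q : Fin k, if 0 ≤ (q : ℤ) + b ∧ (q : ℤ) + b < k then 0
          else ∑ p : Fin k, ‖fourierCoeff u (p - (q + b))‖ ^ 2 := by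
        refine Finset.sum_congr rfl fun q _ => ?_
        split_ifs <;> simp [toeplitzDefect_fourier_apply, *]
    _ ≤ ∑ q : Fin k, if 0 ≤ (q : ℤ) + b ∧ (q : ℤ) + b < k then 0 else ‖u‖ ^ 2 := by
        gcongr with q
        split_ifs
        · rfl
        · have hinj : Function.Injective fun p : Fin k => (p : ℤ) - (q + b) :=
            (sub_left_injective).comp (Nat.cast_injective.comp Fin.val_injective)
          exact (sum_sq_norm_fourierCoeff_le u hinj).trans (by gcongr; exact norm_toLp_le u)
    _ ≤ b.natAbs * ‖u‖ ^ 2 := by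
        rw [Finset.sum_ite, Finset.sum_const_zero, zero_add, Finset.sum_const, nsmul_eq_mul]
        gcongr
        exact_mod_cast card_filter_not_mem_Ico_add_le k b

theorem toeplitzDefect_fourier_isLittleO (u : C(AddCircle T, ℂ)) (b : ℤ) :
    (fun k => ‖toeplitzDefect T u k (fourier b)‖) =o[atTop] fun k : ℕ => √(k : ℝ) := by
  refine (isBigO_of_le' (c := √b.natAbs * ‖u‖) (g := fun _ => (1 : ℝ)) _ fun k => ?_)
    |>.trans_isLittleO ((isLittleO_one_left_iff ℝ).2 ?_)
  · rw [norm_norm, norm_one, mul_one, ← pow_le_pow_iff_left₀ (norm_nonneg _) (by positivity)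
      two_ne_zero, mul_pow, Real.sq_sqrt (Nat.cast_nonneg _)]
    exact norm_toeplitzDefect_fourier_sq_le u k b
  · simp only [Real.norm_of_nonneg (Real.sqrt_nonneg _)]
    exact Real.tendsto_sqrt_atTop.comp tendsto_natCast_atTop_atTop

theorem toeplitzDefect_isLittleO (u v : C(AddCircle T, ℂ)) :
    (fun k => ‖toeplitzDefect T u k v‖) =o[atTop] fun k : ℕ => √(k : ℝ) := by
  have hdense : Dense (Submodule.span ℂ (Set.range (fourier (T := T))) : Set C(AddCircle T, ℂ)) :=
    Submodule.dense_iff_topologicalClosure_eq_top.2 span_fourier_closure_eq_top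
  refine isLittleO_norm_apply_of_dense (toeplitzDefect T u) (C := 2 * ‖u‖) (fun k v => ?_) hdense
    (fun v hv => isLittleO_norm_apply_of_mem_span _ ?_ hv) v
  · rw [Real.norm_of_nonneg (Real.sqrt_nonneg _)]
    exact norm_toeplitzDefect_le u k v
  · rintro _ ⟨b, rfl⟩
    exact toeplitzDefect_fourier_isLittleO u b

end Circle

noncomputable def circleFunction {T : ℝ} {f : ℝ → ℝ} (hper : Function.Periodic f T)
    (hf : Continuous f) : C(AddCircle T, ℂ) :=
  ⟨(hper.comp ((↑) : ℝ → ℂ)).lift, (Complex.continuous_ofReal.comp hf).quotient_liftOn' _⟩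

theorem circleFunction_coe {T : ℝ} {f : ℝ → ℝ} (hper : Function.Periodic f T)
    (hf : Continuous f) (x : ℝ) : circleFunction hper hf x = f x :=
  rfl

theorem circleFunction_mul {T : ℝ} {f g : ℝ → ℝ} (hfper : Function.Periodic f T)
    (hgper : Function.Periodic g T) (hf : Continuous f) (hg : Continuous g) :
    circleFunction (f := fun x => f x * g x) (hfper.mul hgper) (hf.mul hg) =
      circleFunction hfper hf * circleFunction hgper hg := by
  ext x
  induction x using QuotientAddGroup.induction_on
  simp [circleFunction_coe]

instance : Fact (0 < 2 * Real.pi) := ⟨Real.two_pi_pos⟩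

theorem fourierCoefficient_eq_fourierCoeff {f : ℝ → ℝ} (hper : Function.Periodic f (2 * Real.pi))
    (hf : Continuous f) (j : ℤ) :
    fourierCoefficient f j = fourierCoeff (circleFunction hper hf) j := by
  rw [fourierCoeff_eq_intervalIntegral _ j 0, fourierCoefficient, zero_add, Complex.real_smul]
  push_cast
  congr 1
  refine intervalIntegral.integral_congr fun x _ => ?_
  rw [smul_eq_mul, fourier_coe_apply, circleFunction_coe, mul_comm]
  congr 2
  push_cast
  field_simp

theorem toeplitzMatrix_eq_toeplitz {f : ℝ → ℝ} (hper : Function.Periodic f (2 * Real.pi))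
    (hf : Continuous f) (k : ℕ) :
    toeplitzMatrix f k = toeplitz (2 * Real.pi) k (circleFunction hper hf) := by
  ext p q
  exact fourierCoefficient_eq_fourierCoeff hper hf _

/-- **Hilbert–Schmidt form of the product theorem**: for continuous `2π`-periodic
`f, g : ℝ → ℝ`, the normalized squared Frobenius norm
`(1/k) Tr[(T_k[f]·T_k[g] − T_k[f·g])·(T_k[f]·T_k[g] − T_k[f·g])ᴴ]` tends to `0`. -/
theorem hilbert_schmidt_product_theorem
    (f g : ℝ → ℝ) (hf : Continuous f) (hg : Continuous g)
    (hfper : Function.Periodic f (2 * Real.pi))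
    (hgper : Function.Periodic g (2 * Real.pi)) :
    Tendsto (fun k : ℕ =>
        ((toeplitzMatrix f k * toeplitzMatrix g k
            - toeplitzMatrix (fun θ => f θ * g θ) k) *
          (toeplitzMatrix f k * toeplitzMatrix g k
            - toeplitzMatrix (fun θ => f θ * g θ) k)ᴴ).trace / (k : ℂ))
      atTop (nhds 0) := by
  set F := circleFunction hfper hf
  set G := circleFunction hgper hg
  have hdefect (k : ℕ) : toeplitzMatrix f k * toeplitzMatrix g k
      - toeplitzMatrix (fun θ => f θ * g θ) k = toeplitzDefect _ F k G := by
    rw [toeplitzMatrix_eq_toeplitz hfper hf, toeplitzMatrix_eq_toeplitz hgper hg,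
      toeplitzMatrix_eq_toeplitz (f := fun θ => f θ * g θ) (hfper.mul hgper) (hf.mul hg),
      circleFunction_mul]
    rfl
  have hratio := (toeplitzDefect_isLittleO F G).tendsto_div_nhds_zero.pow 2
  simp only [div_pow, Real.sq_sqrt (Nat.cast_nonneg _)] at hratio
  simpa [hdefect, trace_mul_conjTranspose_self] using hratio.ofReal
end

section
/- (Sharp off-diagonal mass asymptotics; the claim of Example 1 of the paper, refining Theorem 2.1 in the circle case.) Let [α₁,β₁] and [α₂,β₂] be nondegenerate closed intervals in ℝ with β_i − α_i < 2π whose images in ℝ/2πℤ are disjoint. Then lim_{k→∞} ∬_{[α₁,β₁]×[α₂,β₂]} (sin²(k(θ−φ)/2) / sin²((θ−φ)/2)) dθ dφ / (4π²) = (1/(8π²)) ∬_{[α₁,β₁]×[α₂,β₂]} dθ dφ / sin²((θ−φ)/2), and this limit is strictly positive. Equivalently, k·μ_k^Berg(K₁×K₂) converges to this positive constant, where K₁, K₂ are the corresponding arcs of S¹. -/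
/-!
Since `sin² (k x / 2) = (1 - cos (k x)) / 2`, the integrand is half the kernel
`1 / sin² ((θ - φ) / 2)` minus that kernel modulated by `cos (k (θ - φ))`. The arcs being
disjoint mod `2π`, the kernel is continuous on the compact rectangle, and it is `≥ 1` there,
which gives positivity. The modulated term tends to `0`: for fixed `θ` by the Riemann–Lebesgue
lemma in `φ`, and then by dominated convergence in `θ`.
-/

open MeasureTheory Filter Real Topology Function Set
open scoped FourierTransform

theorem abs_integral_cos_mul_sub_mul_le_norm_fourierIntegral {g : ℝ → ℝ} (hg : Integrable g)
    (c w : ℝ) :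
    |∫ v, cos (2 * π * w * (c - v)) * g v| ≤ ‖∫ v, 𝐞 (-(v * w)) • (g v : ℂ)‖ := by
  have hint : Integrable fun v => (𝐞 (w * (c - v)) : ℂ) * g v :=
    hg.ofReal.bdd_mul (by fun_prop) (.of_forall fun v => (Circle.norm_coe _).le)
  have hre : ∫ v, cos (2 * π * w * (c - v)) * g v = (∫ v, (𝐞 (w * (c - v)) : ℂ) * g v).re := by
    rw [← Complex.reCLM_apply, ← Complex.reCLM.integral_comp_comm hint]
    congr 1 with v
    rw [Complex.reCLM_apply, Real.fourierChar_apply, Complex.re_mul_ofReal,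
      Complex.exp_ofReal_mul_I_re, mul_assoc]
  have hshift :
      ∫ v, (𝐞 (w * (c - v)) : ℂ) * g v = 𝐞 (w * c) * ∫ v, (𝐞 (-(v * w)) : ℂ) * g v := by
    rw [← integral_const_mul]
    congr 1 with v
    rw [← mul_assoc, ← Circle.coe_mul, ← AddChar.map_add_eq_mul]
    ring_nf
  simp_rw [Circle.smul_def, smul_eq_mul]
  calc |∫ v, cos (2 * π * w * (c - v)) * g v|
      ≤ ‖∫ v, (𝐞 (w * (c - v)) : ℂ) * g v‖ := hre ▸ Complex.abs_re_le_norm _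
    _ = ‖∫ v, (𝐞 (-(v * w)) : ℂ) * g v‖ := by rw [hshift, norm_mul, Circle.norm_coe, one_mul]

theorem tendsto_integral_cos_mul_sub_mul_atTop {g : ℝ → ℝ} (hg : Integrable g) (c : ℝ) :
    Tendsto (fun t : ℝ => ∫ v, cos (t * (c - v)) * g v) atTop (𝓝 0) := by
  have hscale : Tendsto (fun t : ℝ => t / (2 * π)) atTop (cocompact ℝ) :=
    (tendsto_id.atTop_div_const (by positivity)).mono_right atTop_le_cocompact
  have hRL := ((Real.tendsto_integral_exp_smul_cocompact fun v => (g v : ℂ)).comp hscale).norm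
  rw [norm_zero] at hRL
  refine squeeze_zero_norm (fun t => ?_) hRL
  have := abs_integral_cos_mul_sub_mul_le_norm_fourierIntegral hg c (t / (2 * π))
  rwa [mul_div_cancel₀ t (by positivity)] at this

section CompactRectangle

variable {A B : Set ℝ} {H : ℝ → ℝ → ℝ}

theorem integrable_restrict_prod_restrict (hA : IsCompact A) (hB : IsCompact B)
    {f : ℝ × ℝ → ℝ} (hf : ContinuousOn f (A ×ˢ B)) :
    Integrable f ((volume.restrict A).prod (volume.restrict B)) := by
  rw [Measure.prod_restrict, ← Measure.volume_eq_prod]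
  exact hf.integrableOn_compact (hA.prod hB)

theorem tendsto_setIntegral_setIntegral_cos_mul_sub_mul_atTop (hA : IsCompact A)
    (hB : IsCompact B) (hH : ContinuousOn (uncurry H) (A ×ˢ B)) :
    Tendsto (fun t : ℝ => ∫ θ in A, ∫ φ in B, cos (t * (θ - φ)) * H θ φ) atTop (𝓝 0) := by
  obtain ⟨M, hM⟩ := (hA.prod hB).exists_bound_of_continuousOn hH
  have : IsFiniteMeasure (volume.restrict A) := isFiniteMeasure_restrict.2 hA.measure_lt_top.ne
  have hmeas (t : ℝ) : AEStronglyMeasurable (fun θ => ∫ φ in B, cos (t * (θ - φ)) * H θ φ)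
      (volume.restrict A) :=
    (integrable_restrict_prod_restrict hA hB (f := fun p => cos (t * (p.1 - p.2)) * H p.1 p.2)
      ((by fun_prop : Continuous fun p : ℝ × ℝ => cos (t * (p.1 - p.2))).continuousOn.mul hH)
      ).aestronglyMeasurable.integral_prod_right'
  have hbound (t : ℝ) : ∀ θ ∈ A, ‖∫ φ in B, cos (t * (θ - φ)) * H θ φ‖ ≤ M * volume.real B := by
    intro θ hθ
    refine norm_setIntegral_le_of_norm_le_const hB.measure_lt_top fun φ hφ => ?_
    rw [norm_mul]
    exact (mul_le_of_le_one_left (norm_nonneg _) (abs_cos_le_one _)).trans (hM (θ, φ) ⟨hθ, hφ⟩)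
  have hlim : ∀ θ ∈ A, Tendsto (fun t : ℝ => ∫ φ in B, cos (t * (θ - φ)) * H θ φ) atTop (𝓝 0) := by
    intro θ hθ
    have hHθ : IntegrableOn (H θ) B :=
      (ContinuousOn.uncurry_left θ hθ hH).integrableOn_compact hB
    refine (tendsto_integral_cos_mul_sub_mul_atTop
      (hHθ.integrable_indicator hB.measurableSet) θ).congr fun t => ?_
    simp_rw [← integral_indicator hB.measurableSet, indicator_mul_right]
  simpa using tendsto_integral_filter_of_norm_le_const (.of_forall hmeas)
    ⟨M * volume.real B, .of_forall fun t => (ae_restrict_mem hA.measurableSet).mono (hbound t)⟩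
    ((ae_restrict_mem hA.measurableSet).mono hlim)

theorem setIntegral_setIntegral_sin_sq_mul (hA : IsCompact A) (hB : IsCompact B)
    (hH : ContinuousOn (uncurry H) (A ×ˢ B)) (t : ℝ) :
    ∫ θ in A, ∫ φ in B, sin (t * (θ - φ) / 2) ^ 2 * H θ φ =
      1 / 2 * (∫ θ in A, ∫ φ in B, H θ φ)
        - 1 / 2 * ∫ θ in A, ∫ φ in B, cos (t * (θ - φ)) * H θ φ := by
  have hcos : Continuous fun p : ℝ × ℝ => cos (t * (p.1 - p.2)) := by fun_prop
  calc ∫ θ in A, ∫ φ in B, sin (t * (θ - φ) / 2) ^ 2 * H θ φ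
      = ∫ θ in A, ∫ φ in B, (1 / 2 * H θ φ - 1 / 2 * (cos (t * (θ - φ)) * H θ φ)) := by
        congr! 4 with θ φ
        rw [sin_sq_eq_half_sub, mul_div_cancel₀ _ two_ne_zero]
        ring
    _ = (∫ θ in A, ∫ φ in B, 1 / 2 * H θ φ)
          - ∫ θ in A, ∫ φ in B, 1 / 2 * (cos (t * (θ - φ)) * H θ φ) := by
        simpa only using integral_integral_sub (f := fun p => 1 / 2 * H p.1 p.2)
          (g := fun p => 1 / 2 * (cos (t * (p.1 - p.2)) * H p.1 p.2))
          (integrable_restrict_prod_restrict hA hB (continuousOn_const.mul hH))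
          (integrable_restrict_prod_restrict hA hB
            (continuousOn_const.mul (hcos.continuousOn.mul hH)))
    _ = _ := by simp only [integral_const_mul]

theorem tendsto_setIntegral_setIntegral_sin_sq_mul_atTop (hA : IsCompact A) (hB : IsCompact B)
    (hH : ContinuousOn (uncurry H) (A ×ˢ B)) :
    Tendsto (fun t : ℝ => ∫ θ in A, ∫ φ in B, sin (t * (θ - φ) / 2) ^ 2 * H θ φ) atTop
      (𝓝 (1 / 2 * ∫ θ in A, ∫ φ in B, H θ φ)) := by
  simp_rw [setIntegral_setIntegral_sin_sq_mul hA hB hH]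
  have := ((tendsto_setIntegral_setIntegral_cos_mul_sub_mul_atTop hA hB hH).const_mul
    (1 / 2)).const_sub (1 / 2 * ∫ θ in A, ∫ φ in B, H θ φ)
  rwa [mul_zero, sub_zero] at this

theorem mul_measureReal_le_setIntegral_setIntegral (hA : IsCompact A) (hB : IsCompact B)
    (hH : ContinuousOn (uncurry H) (A ×ˢ B)) {c : ℝ} (hc : ∀ θ ∈ A, ∀ φ ∈ B, c ≤ H θ φ) :
    c * (volume.real A * volume.real B) ≤ ∫ θ in A, ∫ φ in B, H θ φ := by
  have hHint : IntegrableOn (uncurry H) (A ×ˢ B) (volume.prod volume) :=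
    hH.integrableOn_compact (hA.prod hB)
  calc c * (volume.real A * volume.real B) = c * (volume.prod volume).real (A ×ˢ B) := by
        rw [measureReal_prod_prod]
    _ ≤ ∫ p in A ×ˢ B, uncurry H p ∂(volume.prod volume) :=
        setIntegral_ge_of_const_le_real (hA.prod hB).measurableSet
          (hA.prod hB).measure_lt_top.ne (fun p hp => hc _ hp.1 _ hp.2) hHint
    _ = ∫ θ in A, ∫ φ in B, H θ φ := setIntegral_prod _ hHint

end CompactRectangle

theorem offdiagonal_mass_asymptotics_circle_general
    (α₁ β₁ α₂ β₂ : ℝ)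
    (h₁ : α₁ < β₁) (h₂ : α₂ < β₂)
    (hdisj : ∀ θ ∈ Set.Icc α₁ β₁, ∀ φ ∈ Set.Icc α₂ β₂, ∀ m : ℤ, θ - φ ≠ 2 * Real.pi * m) :
    Tendsto (fun k : ℕ =>
        (1 / (4 * Real.pi ^ 2)) * ∫ θ in Set.Icc α₁ β₁, ∫ φ in Set.Icc α₂ β₂,
          Real.sin ((k : ℝ) * (θ - φ) / 2) ^ 2 / Real.sin ((θ - φ) / 2) ^ 2)
      atTop
      (nhds ((1 / (8 * Real.pi ^ 2)) * ∫ θ in Set.Icc α₁ β₁, ∫ φ in Set.Icc α₂ β₂,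
        1 / Real.sin ((θ - φ) / 2) ^ 2)) ∧
    0 < (1 / (8 * Real.pi ^ 2)) * ∫ θ in Set.Icc α₁ β₁, ∫ φ in Set.Icc α₂ β₂,
        1 / Real.sin ((θ - φ) / 2) ^ 2 := by
  have hsin : ∀ θ ∈ Icc α₁ β₁, ∀ φ ∈ Icc α₂ β₂, sin ((θ - φ) / 2) ^ 2 ≠ 0 := by
    intro θ hθ φ hφ h0
    obtain ⟨m, hm⟩ := sin_eq_zero_iff.1 (pow_eq_zero_iff two_ne_zero |>.1 h0)
    exact hdisj θ hθ φ hφ m (by linarith)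
  have hH : ContinuousOn (uncurry fun θ φ : ℝ => 1 / sin ((θ - φ) / 2) ^ 2)
      (Icc α₁ β₁ ×ˢ Icc α₂ β₂) :=
    continuousOn_const.div (by fun_prop) fun p hp => hsin p.1 hp.1 p.2 hp.2
  have hpos : 0 < ∫ θ in Icc α₁ β₁, ∫ φ in Icc α₂ β₂, 1 / sin ((θ - φ) / 2) ^ 2 := by
    refine lt_of_lt_of_le ?_ (mul_measureReal_le_setIntegral_setIntegral isCompact_Icc
      isCompact_Icc hH (c := 1) fun θ hθ φ hφ =>
        one_le_one_div ((sq_nonneg _).lt_of_ne' (hsin θ hθ φ hφ)) (sin_sq_le_one _))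
    simp only [Real.volume_real_Icc_of_le h₁.le, Real.volume_real_Icc_of_le h₂.le, one_mul]
    exact mul_pos (sub_pos.2 h₁) (sub_pos.2 h₂)
  refine ⟨?_, by positivity⟩
  have hlim := ((tendsto_setIntegral_setIntegral_sin_sq_mul_atTop isCompact_Icc isCompact_Icc
    hH).comp tendsto_natCast_atTop_atTop).const_mul (1 / (4 * π ^ 2))
  convert hlim using 2 with k
  · simp only [comp_apply, div_eq_mul_one_div (sin _ ^ 2)]
  · ring

/-- **Sharp off-diagonal mass asymptotics for the circle** (Example 1 of the paper):
for two closed arcs of the circle with disjoint images in `ℝ/2πℤ`,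
`k·μ_k^Berg(K₁×K₂)` converges to the strictly positive constant
`(1/(8π²)) ∬ dθ dφ / sin²((θ−φ)/2)`. -/
theorem offdiagonal_mass_asymptotics_circle
    (α₁ β₁ α₂ β₂ : ℝ)
    (h₁ : α₁ < β₁) (h₂ : α₂ < β₂)
    (hlen₁ : β₁ - α₁ < 2 * Real.pi) (hlen₂ : β₂ - α₂ < 2 * Real.pi)
    (hdisj : ∀ θ ∈ Set.Icc α₁ β₁, ∀ φ ∈ Set.Icc α₂ β₂, ∀ m : ℤ, θ - φ ≠ 2 * Real.pi * m) :
    Tendsto (fun k : ℕ =>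
        (1 / (4 * Real.pi ^ 2)) * ∫ θ in Set.Icc α₁ β₁, ∫ φ in Set.Icc α₂ β₂,
          Real.sin ((k : ℝ) * (θ - φ) / 2) ^ 2 / Real.sin ((θ - φ) / 2) ^ 2)
      atTop
      (nhds ((1 / (8 * Real.pi ^ 2)) * ∫ θ in Set.Icc α₁ β₁, ∫ φ in Set.Icc α₂ β₂,
        1 / Real.sin ((θ - φ) / 2) ^ 2)) ∧
    0 < (1 / (8 * Real.pi ^ 2)) * ∫ θ in Set.Icc α₁ β₁, ∫ φ in Set.Icc α₂ β₂,
        1 / Real.sin ((θ - φ) / 2) ^ 2 :=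
  offdiagonal_mass_asymptotics_circle_general α₁ β₁ α₂ β₂ h₁ h₂ hdisj
end

section
/- (Lemma from the proof of Theorem 1.1 of the paper.) Let X be a compact metric space and let 𝒱 ⊆ C(X×X, ℝ) be the linear span of the functions (x,y) ↦ a(x)·b(y), where a, b ∈ C(X,ℝ) have disjoint supports. Then the closure of 𝒱 in the uniform norm equals the set of all continuous functions h : X×X → ℝ satisfying h(x,x) = 0 for every x ∈ X. -/
open Filter

/-- **Lemma from the proof of Theorem 1.1 of the paper**: in `C(X×X, ℝ)` with the uniform
norm, the closure of the linear span of products `a(x)·b(y)` with `a, b` continuous of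
disjoint supports is exactly the set of continuous functions vanishing on the diagonal. -/
theorem closure_span_disjoint_products_eq_vanishing_diagonal
    (X : Type*) [MetricSpace X] [CompactSpace X]
    (V : Submodule ℝ C(X × X, ℝ))
    (hV : V = Submodule.span ℝ {h : C(X × X, ℝ) |
      ∃ a b : C(X, ℝ), Disjoint (tsupport a) (tsupport b) ∧
        ∀ p : X × X, h p = a p.1 * b p.2}) :
    closure (V : Set C(X × X, ℝ)) = {h : C(X × X, ℝ) | ∀ x : X, h (x, x) = 0} := by
  apply subset_antisymm
  · -- easy direction: generators vanish on the diagonal, and the set is closed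
    have hclosed : IsClosed {h : C(X × X, ℝ) | ∀ x : X, h (x, x) = 0} := by
      have heq : {h : C(X × X, ℝ) | ∀ x : X, h (x, x) = 0} =
          ⋂ x : X, {h : C(X × X, ℝ) | h (x, x) = 0} := by
        ext h; simp
      rw [heq]
      exact isClosed_iInter fun x =>
        isClosed_eq (continuous_eval_const (x, x)) continuous_const
    apply closure_minimal _ hclosed
    rw [hV]
    let W : Submodule ℝ C(X × X, ℝ) :=
      { carrier := {h : C(X × X, ℝ) | ∀ x : X, h (x, x) = 0}
        add_mem' := by
          intro a b ha hb x
          simp only [ContinuousMap.add_apply, ha x, hb x, add_zero]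
        zero_mem' := by intro x; simp
        smul_mem' := by
          intro c a ha x
          simp only [ContinuousMap.smul_apply, ha x, smul_zero] }
    have : Submodule.span ℝ {h : C(X × X, ℝ) |
        ∃ a b : C(X, ℝ), Disjoint (tsupport a) (tsupport b) ∧
          ∀ p : X × X, h p = a p.1 * b p.2} ≤ W := by
      rw [Submodule.span_le]
      rintro h ⟨a, b, hab, hprod⟩ x
      have : a x = 0 ∨ b x = 0 := by
        by_contra hc
        push_neg at hc
        exact Set.disjoint_left.mp hab
          (subset_tsupport a hc.1) (subset_tsupport b hc.2)
      have := hprod (x, x)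
      rcases ‹a x = 0 ∨ b x = 0› with h0 | h0 <;> simp [this, h0]
    exact fun h hh => this hh
  · -- hard direction
    intro h hh
    simp only [Set.mem_setOf_eq] at hh
    rw [Metric.mem_closure_iff]
    intro ε hε
    obtain ⟨δ, hδ, hu⟩ := Metric.uniformContinuous_iff.mp
      (CompactSpace.uniformContinuous_of_continuous h.continuous) (ε / 2) (by positivity)
    -- finite cover by balls of radius δ/4
    obtain ⟨t, ht⟩ := isCompact_univ.elim_finite_subcover
      (fun x : X => Metric.ball x (δ / 4)) (fun x => Metric.isOpen_ball)
      (fun x _ => Set.mem_iUnion.mpr ⟨x, Metric.mem_ball_self (by positivity)⟩)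
    set ι := {x // x ∈ t} with hι
    -- partition of unity subordinate to this cover
    obtain ⟨f, hf⟩ := PartitionOfUnity.exists_isSubordinate (ι := ι)
      (s := (Set.univ : Set X)) isClosed_univ
      (fun i => Metric.ball (i : X) (δ / 4)) (fun i => Metric.isOpen_ball)
      (by
        intro x _
        obtain ⟨i, hiU⟩ := Set.mem_iUnion.mp (ht (Set.mem_univ x))
        obtain ⟨hit, hx⟩ := Set.mem_iUnion.mp hiU
        exact Set.mem_iUnion.mpr ⟨⟨i, hit⟩, hx⟩)
    have hsum : ∀ x : X, ∑ i : ι, f i x = 1 := by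
      intro x
      have := f.sum_eq_one (Set.mem_univ x)
      rwa [finsum_eq_sum_of_fintype] at this
    -- indices whose centers are far apart
    set S : Finset (ι × ι) :=
      Finset.univ.filter (fun q : ι × ι => δ / 2 < dist (q.1 : X) (q.2 : X)) with hS
    set g : C(X × X, ℝ) := ∑ q ∈ S, h ((q.1 : X), (q.2 : X)) •
      (((f q.1).comp ContinuousMap.fst) * ((f q.2).comp ContinuousMap.snd)) with hg
    refine ⟨g, ?_, ?_⟩
    · -- g ∈ V
      rw [hV]
      refine Submodule.sum_mem _ fun q hqS => Submodule.smul_mem _ _ ?_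
      apply Submodule.subset_span
      refine ⟨f q.1, f q.2, ?_, fun p => rfl⟩
      have hq : δ / 2 < dist (q.1 : X) (q.2 : X) := (Finset.mem_filter.mp hqS).2
      exact Disjoint.mono (hf q.1) (hf q.2)
        (Metric.ball_disjoint_ball (by linarith))
    · -- dist h g < ε
      have key : ∀ p : X × X, dist (h p) (g p) ≤ ε / 2 := by
        intro p
        obtain ⟨x, y⟩ := p
        -- w q : value used in g for index q
        set w : ι × ι → ℝ := fun q =>
          if δ / 2 < dist (q.1 : X) (q.2 : X) then h ((q.1 : X), (q.2 : X)) else 0 with hw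
        have hgp : g (x, y) = ∑ q : ι × ι, f q.1 x * f q.2 y * w q := by
          rw [hg]
          have : ((∑ q ∈ S, h ((q.1 : X), (q.2 : X)) •
              (((f q.1).comp ContinuousMap.fst) * ((f q.2).comp ContinuousMap.snd))) :
              C(X × X, ℝ)) (x, y)
              = ∑ q ∈ S, h ((q.1 : X), (q.2 : X)) * (f q.1 x * f q.2 y) := by
            simp [ContinuousMap.sum_apply]
          rw [this, hS, Finset.sum_filter]
          refine Finset.sum_congr rfl fun q _ => ?_
          rw [hw]
          by_cases hq : δ / 2 < dist (q.1 : X) (q.2 : X) <;> simp [hq] <;> ring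
        have hone : ∑ q : ι × ι, f q.1 x * f q.2 y = 1 := by
          rw [← Finset.univ_product_univ, Finset.sum_product]
          simp_rw [← Finset.mul_sum, hsum y, mul_one]
          exact hsum x
        rw [Real.dist_eq, hgp]
        calc |h (x, y) - ∑ q : ι × ι, f q.1 x * f q.2 y * w q|
            = |∑ q : ι × ι, f q.1 x * f q.2 y * (h (x, y) - w q)| := by
              congr 1
              simp_rw [mul_sub]
              rw [Finset.sum_sub_distrib, ← Finset.sum_mul, hone, one_mul]
          _ ≤ ∑ q : ι × ι, |f q.1 x * f q.2 y * (h (x, y) - w q)| :=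
              Finset.abs_sum_le_sum_abs _ _
          _ ≤ ∑ q : ι × ι, f q.1 x * f q.2 y * (ε / 2) := by
              refine Finset.sum_le_sum fun q _ => ?_
              rw [abs_mul, abs_mul, abs_of_nonneg (f.nonneg q.1 x),
                abs_of_nonneg (f.nonneg q.2 y)]
              by_cases hx0 : f q.1 x = 0
              · simp [hx0]
              by_cases hy0 : f q.2 y = 0
              · simp [hy0]
              have hxball : x ∈ Metric.ball ((q.1 : ι) : X) (δ / 4) :=
                hf q.1 (subset_tsupport _ hx0)
              have hyball : y ∈ Metric.ball ((q.2 : ι) : X) (δ / 4) :=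
                hf q.2 (subset_tsupport _ hy0)
              refine mul_le_mul_of_nonneg_left ?_
                (mul_nonneg (f.nonneg q.1 x) (f.nonneg q.2 y))
              rw [hw]
              by_cases hq : δ / 2 < dist (q.1 : X) (q.2 : X)
              · simp only [hq, if_pos]
                have hd : dist ((x, y) : X × X) (((q.1 : X), (q.2 : X)) : X × X) < δ := by
                  rw [Prod.dist_eq]
                  have h1 : dist x (q.1 : X) < δ / 4 := Metric.mem_ball.mp hxball
                  have h2 : dist y (q.2 : X) < δ / 4 := Metric.mem_ball.mp hyball
                  exact max_lt (by linarith) (by linarith)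
                have := hu hd
                rw [Real.dist_eq] at this
                linarith [this]
              · simp only [hq, if_neg, not_false_iff, sub_zero]
                push_neg at hq
                have h1 : dist x (q.1 : X) < δ / 4 := Metric.mem_ball.mp hxball
                have h2 : dist y (q.2 : X) < δ / 4 := Metric.mem_ball.mp hyball
                have hxy : dist y x < δ := by
                  have := dist_triangle4 y (q.2 : X) (q.1 : X) x
                  have hd21 : dist (q.2 : X) (q.1 : X) ≤ δ / 2 := by
                    rwa [dist_comm]
                  have hd1x : dist (q.1 : X) x = dist x (q.1 : X) := dist_comm _ _
                  linarith [this, dist_comm y (q.2 : X) ▸ h2]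
                have hd : dist ((x, y) : X × X) ((x, x) : X × X) < δ := by
                  rw [Prod.dist_eq]
                  simp only [dist_self]
                  exact max_lt hδ hxy
                have := hu hd
                rw [Real.dist_eq, hh x, sub_zero] at this
                linarith [abs_nonneg (h (x, y))]
          _ = ε / 2 := by
              rw [← Finset.sum_mul, hone, one_mul]
      have : dist h g ≤ ε / 2 :=
        (ContinuousMap.dist_le (by positivity)).mpr key
      linarith
end

section
/- (Product theorem for Legendre–Toeplitz matrices, as recovered from Theorem 1.2 of the paper.) For all continuous functions f, g : [−1,1] → ℝ, one has lim_{k→∞} (1/k) Tr[ |T_k{f}·T_k{g} − T_k{f·g}| ] = 0, where f·g denotes the pointwise product and |A| := (AA^*)^{1/2}. -/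
open MeasureTheory Filter

/-- The `k × k` matrix `T_k{f}` with entries `∫_{-1}^{1} f(x) L_p(x) L_q(x) dx`, where
`L` is a family of polynomials (to be taken as the orthonormal Legendre polynomials). -/
noncomputable def legendreToeplitz (L : ℕ → Polynomial ℝ) (f : ℝ → ℝ) (k : ℕ) :
    Matrix (Fin k) (Fin k) ℝ :=
  Matrix.of fun p q => ∫ x in (-1:ℝ)..1, f x * (L p).eval x * (L q).eval x

/-- `Tr[|A|]` where `|A| = (A Aᴴ)^{1/2}` is the absolute value of the real matrix `A`. -/
noncomputable def traceAbsReal {k : ℕ} (A : Matrix (Fin k) (Fin k) ℝ) : ℝ :=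
  ((Matrix.posSemidef_self_mul_conjTranspose A).1.eigenvectorUnitary.1 *
    Matrix.diagonal ((RCLike.ofReal : ℝ → ℝ) ∘ Real.sqrt ∘ (Matrix.posSemidef_self_mul_conjTranspose A).1.eigenvalues) *
    (star (Matrix.posSemidef_self_mul_conjTranspose A).1.eigenvectorUnitary : Matrix (Fin k) (Fin k) ℝ)).trace

/-!
Write `e_h(p, q) = ∫ h L_p L_q`, so that `T_k{h}` is the leading `k × k` block of `e_h`.
If `Q` is a polynomial of degree `d`, then `Q L_q` lies in the span of `L_0, …, L_{q+d}`, so by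
orthonormality `T_k{fQ}_{pq} = ∑_{r < k+d} e_f(p, r) e_Q(r, q)`: the defect
`T_k{f} T_k{Q} - T_k{fQ}` is minus the product of the blocks `(e_f(p, k+j))_{p<k, j<d}` and
`(e_Q(k+j, q))_{j<d, q<k}`. Bessel's inequality bounds the columns of these blocks by `‖f‖_∞` and
`‖Q‖_∞`, so the defect has Frobenius norm at most `d ‖f‖_∞ ‖Q‖_∞`, uniformly in `k`. Bessel also
gives `‖T_k{h} B‖_F ≤ ‖h‖_∞ ‖B‖_F` and `‖T_k{h}‖_F ≤ √k ‖h‖_∞`, hence replacing `g` by a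
Weierstrass approximation `Q` with `‖g - Q‖_∞ ≤ δ` costs at most `2 ‖f‖_∞ δ √k`. Finally
`Tr |A| ≤ √k ‖A‖_F` by Cauchy–Schwarz on the singular values, so
`(1/k) Tr |T_k{f} T_k{g} - T_k{fg}| ≤ C_δ / √k + 2 ‖f‖_∞ δ`.
-/

open Polynomial intervalIntegral Set
open scoped Matrix Matrix.Norms.Frobenius

lemma intervalIntegral.integral_mul_finset_sum {ι : Type*} {a b : ℝ} {h : ℝ → ℝ}
    {φ : ι → ℝ → ℝ} (s : Finset ι) (c : ι → ℝ)
    (hint : ∀ i ∈ s, IntervalIntegrable (fun x => h x * φ i x) volume a b) :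
    ∫ x in a..b, h x * ∑ i ∈ s, c i * φ i x = ∑ i ∈ s, c i * ∫ x in a..b, h x * φ i x := by
  simp_rw [Finset.mul_sum, mul_left_comm (h _)]
  rw [integral_finsetSum fun i hi => (hint i hi).const_mul (c i)]
  simp_rw [integral_const_mul]

def OrthonormalOn {ι : Type*} [DecidableEq ι] (a b : ℝ) (φ : ι → ℝ → ℝ) : Prop :=
  ∀ i j, ∫ x in a..b, φ i x * φ j x = if i = j then 1 else 0

namespace OrthonormalOn

variable {ι κ : Type*} [DecidableEq ι] [DecidableEq κ] {a b : ℝ} {φ : ι → ℝ → ℝ}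

lemma comp (hφ : OrthonormalOn a b φ) {e : κ → ι} (he : e.Injective) :
    OrthonormalOn a b fun i => φ (e i) :=
  fun i j => by simp only [hφ (e i) (e j), he.eq_iff]

lemma integral_mul_sum (hφ : OrthonormalOn a b φ) (hcont : ∀ i, Continuous (φ i)) (i : ι)
    (s : Finset ι) (c : ι → ℝ) :
    ∫ x in a..b, φ i x * ∑ j ∈ s, c j * φ j x = if i ∈ s then c i else 0 := by
  rw [integral_mul_finset_sum s c fun j _ => ((hcont i).mul (hcont j)).intervalIntegrable a b]
  simp [hφ i, eq_comm (a := i)]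

lemma integral_sq (hφ : OrthonormalOn a b φ) (i : ι) : ∫ x in a..b, φ i x ^ 2 = 1 := by
  simpa [sq] using hφ i i

lemma integral_sum_sq (hφ : OrthonormalOn a b φ) (hcont : ∀ i, Continuous (φ i))
    (s : Finset ι) (c : ι → ℝ) :
    ∫ x in a..b, (∑ i ∈ s, c i * φ i x) ^ 2 = ∑ i ∈ s, c i ^ 2 := by
  have hS : Continuous fun x => ∑ i ∈ s, c i * φ i x := by fun_prop
  simp_rw [sq]
  rw [integral_mul_finset_sum s c fun i _ => (hS.mul (hcont i)).intervalIntegrable a b]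
  refine Finset.sum_congr rfl fun i hi => ?_
  rw [integral_congr fun x _ => mul_comm _ (φ i x), hφ.integral_mul_sum hcont, if_pos hi]

lemma sum_sq_integral_mul_le (hφ : OrthonormalOn a b φ) (hcont : ∀ i, Continuous (φ i))
    (hab : a ≤ b) {h : ℝ → ℝ} (hh : ContinuousOn h (Icc a b)) (s : Finset ι) :
    ∑ i ∈ s, (∫ x in a..b, h x * φ i x) ^ 2 ≤ ∫ x in a..b, h x ^ 2 := by
  rw [← uIcc_of_le hab] at hh
  set c := fun i => ∫ x in a..b, h x * φ i x
  set S := fun x => ∑ i ∈ s, c i * φ i x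
  have hS : Continuous S := by fun_prop
  have hhS : ∫ x in a..b, h x * S x = ∑ i ∈ s, c i ^ 2 := by
    rw [integral_mul_finset_sum s c fun i _ => (hh.mul (hcont i).continuousOn).intervalIntegrable]
    simp only [c, sq]
  have hSS : ∫ x in a..b, S x ^ 2 = ∑ i ∈ s, c i ^ 2 := hφ.integral_sum_sq hcont s c
  have i1 : IntervalIntegrable (fun x => h x ^ 2) volume a b := (hh.pow 2).intervalIntegrable
  have i2 : IntervalIntegrable (fun x => 2 * (h x * S x)) volume a b :=
    ((hh.mul hS.continuousOn).intervalIntegrable).const_mul 2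
  have i3 : IntervalIntegrable (fun x => S x ^ 2) volume a b := (hS.pow 2).intervalIntegrable a b
  have hexpand : ∫ x in a..b, (h x - S x) ^ 2
      = (∫ x in a..b, h x ^ 2) - 2 * (∫ x in a..b, h x * S x) + ∫ x in a..b, S x ^ 2 := by
    simp_rw [sub_sq, mul_assoc]
    rw [intervalIntegral.integral_add (i1.sub i2) i3, intervalIntegral.integral_sub i1 i2,
      intervalIntegral.integral_const_mul]
  have hnonneg : 0 ≤ ∫ x in a..b, (h x - S x) ^ 2 := integral_nonneg hab fun x _ => sq_nonneg _
  change ∑ i ∈ s, c i ^ 2 ≤ _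
  linarith

lemma sum_sq_integral_mul_mul_le (hφ : OrthonormalOn a b φ) (hcont : ∀ i, Continuous (φ i))
    (hab : a ≤ b) {h w : ℝ → ℝ} (hh : ContinuousOn h (Icc a b)) (hw : Continuous w) {M : ℝ}
    (hM : ∀ x ∈ Icc a b, |h x| ≤ M) (s : Finset ι) :
    ∑ i ∈ s, (∫ x in a..b, h x * φ i x * w x) ^ 2 ≤ M ^ 2 * ∫ x in a..b, w x ^ 2 := by
  have hhw : ContinuousOn (fun x => h x * w x) (Icc a b) := hh.mul hw.continuousOn
  calc ∑ i ∈ s, (∫ x in a..b, h x * φ i x * w x) ^ 2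
      = ∑ i ∈ s, (∫ x in a..b, (h x * w x) * φ i x) ^ 2 := by simp_rw [mul_right_comm (h _)]
    _ ≤ ∫ x in a..b, (h x * w x) ^ 2 := hφ.sum_sq_integral_mul_le hcont hab hhw s
    _ ≤ ∫ x in a..b, M ^ 2 * w x ^ 2 := by
        refine integral_mono_on hab ((hhw.pow 2).intervalIntegrable_of_Icc hab)
          (((hw.pow 2).const_mul _).intervalIntegrable a b) fun x hx => ?_
        rw [mul_pow]
        exact mul_le_mul_of_nonneg_right (sq_le_sq.2 ((hM x hx).trans (le_abs_self M)))
          (sq_nonneg _)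
    _ = M ^ 2 * ∫ x in a..b, w x ^ 2 := intervalIntegral.integral_const_mul _ _

end OrthonormalOn

section Polynomial

variable {L : ℕ → ℝ[X]} {a b : ℝ}

lemma OrthonormalOn.polynomial_ne_zero (hL : OrthonormalOn a b fun n x => (L n).eval x)
    (n : ℕ) : L n ≠ 0 := by
  intro h0
  simpa [h0] using hL n n

lemma exists_sum_smul_eq_of_natDegree_lt (hdeg : ∀ n, (L n).natDegree = n)
    (hne : ∀ n, L n ≠ 0) {P : ℝ[X]} {N : ℕ} (hP : P.natDegree < N) :
    ∃ c : ℕ → ℝ, ∑ r ∈ Finset.range N, c r • L r = P := by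
  let S : Polynomial.Sequence ℝ := ⟨L, fun n => by rw [degree_eq_natDegree (hne n), hdeg]⟩
  have hspan := S.span_degreeLT (m := N) fun i _ => (leadingCoeff_ne_zero.2 (hne i)).isUnit
  have hmem : P ∈ degreeLT ℝ N :=
    mem_degreeLT.2 (degree_le_natDegree.trans_lt (by exact_mod_cast hP))
  rw [← hspan, ← Finset.coe_range] at hmem
  exact (Submodule.mem_span_image_finset_iff_exists_fun' ℝ).1 hmem

lemma integral_mul_eval_eq_sum (hdeg : ∀ n, (L n).natDegree = n)
    (hL : OrthonormalOn a b fun n x => (L n).eval x) {w : ℝ → ℝ}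
    (hw : IntervalIntegrable w volume a b) {P : ℝ[X]} {N : ℕ} (hP : P.natDegree < N) :
    ∫ x in a..b, w x * P.eval x = ∑ r ∈ Finset.range N,
      (∫ x in a..b, w x * (L r).eval x) * ∫ x in a..b, (L r).eval x * P.eval x := by
  obtain ⟨c, rfl⟩ := exists_sum_smul_eq_of_natDegree_lt hdeg hL.polynomial_ne_zero hP
  have hcont : ∀ n, Continuous fun x => (L n).eval x := fun n => (L n).continuous
  simp only [eval_finsetSum, eval_smul, smul_eq_mul]
  rw [integral_mul_finset_sum _ c fun r _ => hw.mul_continuousOn (hcont r).continuousOn]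
  refine Finset.sum_congr rfl fun r hr => ?_
  rw [hL.integral_mul_sum hcont, if_pos hr, mul_comm]

end Polynomial

lemma Matrix.frobenius_norm_sq_eq_sum_sq {m n : Type*} [Fintype m] [Fintype n]
    (A : Matrix m n ℝ) : ‖A‖ ^ 2 = ∑ i, ∑ j, A i j ^ 2 := by
  simp only [frobenius_norm_def, Real.norm_eq_abs, Real.rpow_two, sq_abs]
  rw [← Real.sqrt_eq_rpow, Real.sq_sqrt (by positivity)]

lemma Matrix.frobenius_norm_le_of_sum_sq_col_le {m n : Type*} [Fintype m] [Fintype n]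
    (A : Matrix m n ℝ) (c : n → ℝ) (h : ∀ j, ∑ i, A i j ^ 2 ≤ c j) : ‖A‖ ≤ √(∑ j, c j) :=
  Real.le_sqrt_of_sq_le <| by
    rw [A.frobenius_norm_sq_eq_sum_sq, Finset.sum_comm]
    exact Finset.sum_le_sum fun j _ => h j

section LegendreToeplitz

variable {L : ℕ → ℝ[X]}

/-- `legendreToeplitz L h k` is the case `σ = Fin.val`. -/
noncomputable def legendreBlock (L : ℕ → ℝ[X]) (h : ℝ → ℝ) (k : ℕ) {n : Type*} (σ : n → ℕ) :
    Matrix (Fin k) n ℝ :=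
  Matrix.of fun p j => ∫ x in (-1:ℝ)..1, h x * (L p).eval x * (L (σ j)).eval x

lemma norm_legendreBlock_le (hL : OrthonormalOn (-1) 1 fun n x => (L n).eval x) {h : ℝ → ℝ}
    (hh : ContinuousOn h (Icc (-1) 1)) {M : ℝ} (hM : ∀ x ∈ Icc (-1:ℝ) 1, |h x| ≤ M) (k : ℕ)
    {n : Type*} [Fintype n] (σ : n → ℕ) :
    ‖legendreBlock L h k σ‖ ≤ √(Fintype.card n) * M := by
  have hM0 : 0 ≤ M := (abs_nonneg _).trans (hM 0 (by norm_num))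
  have hcol : ∀ j, ∑ p, legendreBlock L h k σ p j ^ 2 ≤ M ^ 2 := fun j => by
    simpa [legendreBlock, hL.integral_sq (σ j)] using
      (hL.comp Fin.val_injective).sum_sq_integral_mul_mul_le
      (fun p => (L p).continuous) (by norm_num) hh (L (σ j)).continuous hM Finset.univ
  refine (Matrix.frobenius_norm_le_of_sum_sq_col_le _ _ hcol).trans_eq ?_
  rw [Finset.sum_const, Finset.card_univ, nsmul_eq_mul, Real.sqrt_mul (Nat.cast_nonneg _),
    Real.sqrt_sq hM0]

lemma norm_legendreToeplitz_le (hL : OrthonormalOn (-1) 1 fun n x => (L n).eval x)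
    {h : ℝ → ℝ} (hh : ContinuousOn h (Icc (-1) 1)) {M : ℝ}
    (hM : ∀ x ∈ Icc (-1:ℝ) 1, |h x| ≤ M) (k : ℕ) :
    ‖legendreToeplitz L h k‖ ≤ √k * M := by
  have := norm_legendreBlock_le hL hh hM k fun q : Fin k => (q : ℕ)
  rwa [Fintype.card_fin] at this

lemma norm_legendreToeplitz_mul_le (hL : OrthonormalOn (-1) 1 fun n x => (L n).eval x)
    {h : ℝ → ℝ} (hh : ContinuousOn h (Icc (-1) 1)) {M : ℝ}
    (hM : ∀ x ∈ Icc (-1:ℝ) 1, |h x| ≤ M) {k : ℕ} (B : Matrix (Fin k) (Fin k) ℝ) :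
    ‖legendreToeplitz L h k * B‖ ≤ M * ‖B‖ := by
  have hM0 : 0 ≤ M := (abs_nonneg _).trans (hM 0 (by norm_num))
  have hcont : ∀ p : Fin k, Continuous fun x => (L p).eval x := fun p => (L p).continuous
  have hLk : OrthonormalOn (-1) 1 fun (p : Fin k) x => (L p).eval x := hL.comp Fin.val_injective
  have hcol (q : Fin k) :
      ∑ p, (legendreToeplitz L h k * B) p q ^ 2 ≤ M ^ 2 * ∑ r, B r q ^ 2 := by
    have hentry : ∀ p, (legendreToeplitz L h k * B) p q
        = ∫ x in (-1:ℝ)..1, h x * (L p).eval x * ∑ r, B r q * (L r).eval x := fun p => by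
      rw [integral_mul_finset_sum (h := fun x => h x * (L p).eval x) _ _ fun r _ =>
        ((hh.mul (hcont p).continuousOn).mul (hcont r).continuousOn).intervalIntegrable_of_Icc
          (by norm_num)]
      simp [Matrix.mul_apply, legendreToeplitz, mul_comm]
    simp_rw [hentry]
    calc _ ≤ M ^ 2 * ∫ x in (-1:ℝ)..1, (∑ r, B r q * (L r).eval x) ^ 2 :=
          hLk.sum_sq_integral_mul_mul_le hcont (by norm_num) hh
            (continuous_finsetSum _ fun r _ => continuous_const.mul (hcont r)) hM Finset.univ
      _ = M ^ 2 * ∑ r, B r q ^ 2 := by rw [hLk.integral_sum_sq hcont]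
  refine (Matrix.frobenius_norm_le_of_sum_sq_col_le _ _ hcol).trans_eq ?_
  rw [← Finset.mul_sum, Finset.sum_comm, ← Matrix.frobenius_norm_sq_eq_sum_sq, ← mul_pow,
    Real.sqrt_sq (by positivity)]

lemma legendreToeplitz_sub {h₁ h₂ : ℝ → ℝ} (hh₁ : ContinuousOn h₁ (Icc (-1) 1))
    (hh₂ : ContinuousOn h₂ (Icc (-1) 1)) (k : ℕ) :
    legendreToeplitz L (fun x => h₁ x - h₂ x) k
      = legendreToeplitz L h₁ k - legendreToeplitz L h₂ k := by
  have hint : ∀ {h : ℝ → ℝ}, ContinuousOn h (Icc (-1) 1) → ∀ p q : Fin k,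
      IntervalIntegrable (fun x => h x * (L p).eval x * (L q).eval x) volume (-1) 1 :=
    fun hh p q => ((hh.mul (L p).continuous.continuousOn).mul
      (L q).continuous.continuousOn).intervalIntegrable_of_Icc (by norm_num)
  ext p q
  simp only [legendreToeplitz, Matrix.of_apply, Matrix.sub_apply, sub_mul]
  exact intervalIntegral.integral_sub (hint hh₁ p q) (hint hh₂ p q)

lemma legendreToeplitz_mul_sub_eq (hdeg : ∀ n, (L n).natDegree = n)
    (hL : OrthonormalOn (-1) 1 fun n x => (L n).eval x) {f : ℝ → ℝ}
    (hf : ContinuousOn f (Icc (-1) 1)) (Q : ℝ[X]) (k : ℕ) :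
    legendreToeplitz L f k * legendreToeplitz L (fun x => Q.eval x) k
        - legendreToeplitz L (fun x => f x * Q.eval x) k
      = -(legendreBlock L f k (fun j : Fin Q.natDegree => k + j)
          * (legendreBlock L (fun x => Q.eval x) k fun j : Fin Q.natDegree => k + j)ᵀ) := by
  ext p q
  set F : ℕ → ℝ := fun r => (∫ x in (-1:ℝ)..1, f x * (L p).eval x * (L r).eval x)
    * ∫ x in (-1:ℝ)..1, Q.eval x * (L q).eval x * (L r).eval x
  have hprod : (legendreToeplitz L f k * legendreToeplitz L (fun x => Q.eval x) k) p q
      = ∑ r ∈ Finset.range k, F r := by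
    rw [Matrix.mul_apply, ← Fin.sum_univ_eq_sum_range F]
    refine Finset.sum_congr rfl fun r _ => ?_
    simp only [legendreToeplitz, Matrix.of_apply, F]
    congr 1
    exact integral_congr fun x _ => by ring
  have hfull : legendreToeplitz L (fun x => f x * Q.eval x) k p q
      = ∑ r ∈ Finset.range (k + Q.natDegree), F r := by
    have hdegQ : (Q * L q).natDegree < k + Q.natDegree :=
      natDegree_mul_le.trans_lt (by rw [hdeg]; omega)
    have hw : IntervalIntegrable (fun x => f x * (L p).eval x) volume (-1) 1 :=
      (hf.mul (L p).continuous.continuousOn).intervalIntegrable_of_Icc (by norm_num)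
    simp only [legendreToeplitz, Matrix.of_apply]
    rw [integral_congr (g := fun x => f x * (L p).eval x * (Q * L q).eval x)
      fun x _ => by simp only [eval_mul]; ring, integral_mul_eval_eq_sum hdeg hL hw hdegQ]
    refine Finset.sum_congr rfl fun r _ => ?_
    congr 1
    exact integral_congr fun x _ => by simp only [eval_mul]; ring
  have htail : (legendreBlock L f k (fun j : Fin Q.natDegree => k + j)
      * (legendreBlock L (fun x => Q.eval x) k fun j : Fin Q.natDegree => k + j)ᵀ) p q
      = ∑ j ∈ Finset.range Q.natDegree, F (k + j) := by
    rw [Matrix.mul_apply, ← Fin.sum_univ_eq_sum_range]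
    rfl
  rw [Matrix.sub_apply, Matrix.neg_apply, hprod, hfull, htail, Finset.sum_range_add]
  ring

lemma norm_legendreToeplitz_mul_sub_le_of_polynomial (hdeg : ∀ n, (L n).natDegree = n)
    (hL : OrthonormalOn (-1) 1 fun n x => (L n).eval x) {f : ℝ → ℝ}
    (hf : ContinuousOn f (Icc (-1) 1)) {M : ℝ} (hM : ∀ x ∈ Icc (-1:ℝ) 1, |f x| ≤ M)
    (Q : ℝ[X]) {MQ : ℝ} (hMQ : ∀ x ∈ Icc (-1:ℝ) 1, |Q.eval x| ≤ MQ) (k : ℕ) :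
    ‖legendreToeplitz L f k * legendreToeplitz L (fun x => Q.eval x) k
        - legendreToeplitz L (fun x => f x * Q.eval x) k‖ ≤ Q.natDegree * (M * MQ) := by
  have hM0 : 0 ≤ M := (abs_nonneg _).trans (hM 0 (by norm_num))
  set σ : Fin Q.natDegree → ℕ := fun j => k + j
  rw [legendreToeplitz_mul_sub_eq hdeg hL hf, norm_neg]
  calc _ ≤ ‖legendreBlock L f k σ‖ * ‖(legendreBlock L (fun x => Q.eval x) k σ)ᵀ‖ :=
        Matrix.frobenius_norm_mul _ _
    _ ≤ (√Q.natDegree * M) * (√Q.natDegree * MQ) := by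
        rw [Matrix.frobenius_norm_transpose]
        refine mul_le_mul ?_ ?_ (norm_nonneg _) (by positivity)
        · simpa using norm_legendreBlock_le hL hf hM k σ
        · simpa using norm_legendreBlock_le hL Q.continuous.continuousOn hMQ k σ
    _ = Q.natDegree * (M * MQ) := by
        rw [mul_mul_mul_comm, Real.mul_self_sqrt (Nat.cast_nonneg _)]

lemma norm_legendreToeplitz_mul_sub_le (hdeg : ∀ n, (L n).natDegree = n)
    (hL : OrthonormalOn (-1) 1 fun n x => (L n).eval x) {f g : ℝ → ℝ}
    (hf : ContinuousOn f (Icc (-1) 1)) (hg : ContinuousOn g (Icc (-1) 1)) {M : ℝ}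
    (hM : ∀ x ∈ Icc (-1:ℝ) 1, |f x| ≤ M) (Q : ℝ[X]) {δ MQ : ℝ}
    (hgQ : ∀ x ∈ Icc (-1:ℝ) 1, |g x - Q.eval x| ≤ δ)
    (hMQ : ∀ x ∈ Icc (-1:ℝ) 1, |Q.eval x| ≤ MQ) (k : ℕ) :
    ‖legendreToeplitz L f k * legendreToeplitz L g k
        - legendreToeplitz L (fun x => f x * g x) k‖
      ≤ Q.natDegree * (M * MQ) + 2 * M * δ * √k := by
  have hM0 : 0 ≤ M := (abs_nonneg _).trans (hM 0 (by norm_num))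
  have hQ : ContinuousOn (fun x => Q.eval x) (Icc (-1) 1) := Q.continuous.continuousOn
  have hsplit : legendreToeplitz L f k * legendreToeplitz L g k
        - legendreToeplitz L (fun x => f x * g x) k
      = (legendreToeplitz L f k * legendreToeplitz L (fun x => Q.eval x) k
          - legendreToeplitz L (fun x => f x * Q.eval x) k)
        + (legendreToeplitz L f k * legendreToeplitz L (fun x => g x - Q.eval x) k
          - legendreToeplitz L (fun x => f x * (g x - Q.eval x)) k) := by
    simp_rw [mul_sub]
    rw [legendreToeplitz_sub hg hQ, legendreToeplitz_sub (h₁ := fun x => f x * g x)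
      (h₂ := fun x => f x * Q.eval x) (hf.mul hg) (hf.mul hQ)]
    noncomm_ring
  have hfgQ : ∀ x ∈ Icc (-1:ℝ) 1, |f x * (g x - Q.eval x)| ≤ M * δ := fun x hx => by
    rw [abs_mul]
    exact mul_le_mul (hM x hx) (hgQ x hx) (abs_nonneg _) hM0
  rw [hsplit]
  refine (norm_add_le _ _).trans ((add_le_add
    (norm_legendreToeplitz_mul_sub_le_of_polynomial hdeg hL hf hM Q hMQ k)
    (norm_sub_le _ _)).trans ?_)
  have h1 := (norm_legendreToeplitz_mul_le hL hf hM _).trans (mul_le_mul_of_nonneg_left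
    (norm_legendreToeplitz_le (h := fun x => g x - Q.eval x) hL (hg.sub hQ) hgQ k) hM0)
  have h2 := norm_legendreToeplitz_le (h := fun x => f x * (g x - Q.eval x)) hL
    (hf.mul (hg.sub hQ)) hfgQ k
  linarith

lemma exists_norm_legendreToeplitz_mul_sub_le (hdeg : ∀ n, (L n).natDegree = n)
    (hL : OrthonormalOn (-1) 1 fun n x => (L n).eval x) {f g : ℝ → ℝ}
    (hf : ContinuousOn f (Icc (-1) 1)) (hg : ContinuousOn g (Icc (-1) 1)) {ε : ℝ}
    (hε : 0 < ε) :
    ∃ K, ∀ k, ‖legendreToeplitz L f k * legendreToeplitz L g k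
        - legendreToeplitz L (fun x => f x * g x) k‖ ≤ K + ε * √k := by
  obtain ⟨M, hM⟩ := isCompact_Icc.exists_bound_of_continuousOn hf
  have hM0 : 0 ≤ M := (norm_nonneg _).trans (hM 0 (by norm_num))
  obtain ⟨Q, hQ⟩ := exists_polynomial_near_of_continuousOn (-1) 1 g hg (ε / (2 * M + 1))
    (by positivity)
  obtain ⟨MQ, hMQ⟩ := isCompact_Icc.exists_bound_of_continuousOn Q.continuous.continuousOn
  refine ⟨Q.natDegree * (M * MQ), fun k => (norm_legendreToeplitz_mul_sub_le hdeg hL hf hg hM Q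
    (fun x hx => (abs_sub_comm _ _).trans_le (hQ x hx).le) hMQ k).trans ?_⟩
  gcongr
  rw [mul_div_assoc', div_le_iff₀ (by positivity)]
  nlinarith

end LegendreToeplitz

lemma traceAbsReal_eq_sum_sqrt_eigenvalues {k : ℕ} (A : Matrix (Fin k) (Fin k) ℝ) :
    traceAbsReal A
      = ∑ i, √((Matrix.posSemidef_self_mul_conjTranspose A).1.eigenvalues i) := by
  rw [traceAbsReal, Matrix.trace_mul_cycle, Unitary.star_mul_self_of_mem
    (Matrix.posSemidef_self_mul_conjTranspose A).1.eigenvectorUnitary.2, one_mul,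
    Matrix.trace_diagonal]
  rfl

lemma traceAbsReal_nonneg {k : ℕ} (A : Matrix (Fin k) (Fin k) ℝ) : 0 ≤ traceAbsReal A := by
  rw [traceAbsReal_eq_sum_sqrt_eigenvalues]
  exact Finset.sum_nonneg fun i _ => Real.sqrt_nonneg _

lemma traceAbsReal_le_sqrt_mul_norm {k : ℕ} (A : Matrix (Fin k) (Fin k) ℝ) :
    traceAbsReal A ≤ √k * ‖A‖ := by
  have hA := Matrix.posSemidef_self_mul_conjTranspose A
  have htrace : ∑ i, hA.1.eigenvalues i = ‖A‖ ^ 2 := by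
    have := hA.1.trace_eq_sum_eigenvalues
    simp only [RCLike.ofReal_real_eq_id, id] at this
    rw [← this, Matrix.frobenius_norm_sq_eq_sum_sq]
    simp [Matrix.trace, Matrix.mul_apply, sq]
  rw [traceAbsReal_eq_sum_sqrt_eigenvalues]
  calc ∑ i, √(hA.1.eigenvalues i) = ∑ i, √1 * √(hA.1.eigenvalues i) := by simp
    _ ≤ √(∑ _i : Fin k, (1:ℝ)) * √(∑ i, hA.1.eigenvalues i) :=
        Real.sum_sqrt_mul_sqrt_le _ (fun _ => zero_le_one) hA.eigenvalues_nonneg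
    _ = √k * ‖A‖ := by rw [htrace, Real.sqrt_sq (norm_nonneg _)]; simp

lemma traceAbsReal_div_le {k : ℕ} (A : Matrix (Fin k) (Fin k) ℝ) :
    traceAbsReal A / k ≤ ‖A‖ / √k := by
  rcases k.eq_zero_or_pos with rfl | hk
  · simp
  rw [div_le_div_iff₀ (by positivity) (by positivity)]
  calc traceAbsReal A * √k ≤ √k * ‖A‖ * √k := by gcongr; exact traceAbsReal_le_sqrt_mul_norm A
    _ = ‖A‖ * k := by rw [mul_right_comm, Real.mul_self_sqrt (Nat.cast_nonneg _), mul_comm]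

lemma tendsto_zero_of_le_add_mul_sqrt_div_sqrt {u : ℕ → ℝ} (h0 : ∀ k, 0 ≤ u k)
    (h : ∀ ε > 0, ∃ K, ∀ k : ℕ, u k ≤ (K + ε * √k) / √k) : Tendsto u atTop (nhds 0) := by
  refine tendsto_order.2 ⟨fun a ha => .of_forall fun k => ha.trans_le (h0 k), fun ε hε => ?_⟩
  obtain ⟨K, hK⟩ := h (ε / 2) (half_pos hε)
  have hlim : Tendsto (fun k : ℕ => K / √k) atTop (nhds 0) :=
    tendsto_const_nhds.div_atTop (Real.tendsto_sqrt_atTop.comp tendsto_natCast_atTop_atTop)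
  filter_upwards [hlim.eventually (gt_mem_nhds (half_pos hε))] with k hk
  calc u k ≤ K / √k + ε / 2 * (√k / √k) := by rw [← mul_div_assoc, ← add_div]; exact hK k
    _ ≤ K / √k + ε / 2 * 1 := by gcongr; exact div_self_le_one _
    _ < ε := by linarith

/-- **Product theorem for Legendre–Toeplitz matrices**: for continuous
`f, g : [−1,1] → ℝ`, `(1/k) Tr[|T_k{f}·T_k{g} − T_k{f·g}|] → 0` as `k → ∞`. -/
theorem product_theorem_legendre_toeplitz
    (L : ℕ → Polynomial ℝ)
    (hL_deg : ∀ n, (L n).natDegree = n)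
    (hL_orth : ∀ n m, (∫ x in (-1:ℝ)..1, (L n).eval x * (L m).eval x)
      = if n = m then 1 else 0)
    (f g : ℝ → ℝ)
    (hf : ContinuousOn f (Set.Icc (-1) 1)) (hg : ContinuousOn g (Set.Icc (-1) 1)) :
    Tendsto (fun k : ℕ =>
        traceAbsReal (legendreToeplitz L f k * legendreToeplitz L g k
          - legendreToeplitz L (fun x => f x * g x) k) / (k : ℝ))
      atTop (nhds 0) := by
  refine tendsto_zero_of_le_add_mul_sqrt_div_sqrt
    (fun k => div_nonneg (traceAbsReal_nonneg _) k.cast_nonneg) fun ε hε => ?_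
  obtain ⟨K, hK⟩ := exists_norm_legendreToeplitz_mul_sub_le hL_deg hL_orth hf hg hε
  exact ⟨K, fun k => (traceAbsReal_div_le _).trans
    (div_le_div_of_nonneg_right (hK k) (Real.sqrt_nonneg _))⟩
end
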